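/- arXiv:1809.03460 — 5 statements merged into one kernel-verified Lean document; each statement's English description precedes it below -/
import Mathlib

section
/- Let G be a group and let g ∈ G be a nontrivial element of finite order. Let l, k be integers, not both zero. Let Q be the quotient of the free product G ∗ F(x) (F(x) the free group on one generator x) by the normal closure of the element x^l · g · x^k · g⁻¹. Then the natural homomorphism G → Q (induced by the inclusion of G into the free product) is bijective if and only if |l + k| = 1 and (l = 0 or k = 0). -/
/-!
`G` is a retract of `G ∗ ⟨x⟩` compatibly with the relator, so the natural map is always injective.
If `l = 0` or `k = 0` the relator is conjugate to `x ^ (l + k)`, so for `|l + k| = 1` the letter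
`x` dies in the quotient and the map is onto.

Conversely, if the map is onto, then for every `ρ : G →* H` and `X : H` with
`Xˡ ρ(g) Xᵏ ρ(g)⁻¹ = 1` the element `X` lies in `ρ(G)`. Take `H` the wreath product
`(G → R) ⋊ G` over a nontrivial ring `R` containing a unit `u` with `u ^ orderOf g = 1` and
`l u + k = 0`, and `X` the function equal to `u ^ m` at `g ^ m` and `0` off `⟨g⟩`; this `X` is not
in `G`. The choice `R = ℤ/(l + k)`, `u = 1` forces `|l + k| = 1`. If moreover `l, k ≠ 0`, then
`|lⁿ - (-k)ⁿ| ≥ 2` for `n = orderOf g ≥ 2`, and `u = -k/l` in `𝔽_p`, for a prime `p` dividing it,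
works.
-/

open Monoid Monoid.Coprod

section General

variable {G P H : Type*} [Group G] [Group P] [Group H]

theorem QuotientGroup.exists_apply_eq_of_surjective_mk'_comp {N : Subgroup P} [N.Normal]
    {f : G →* P} (hs : Function.Surjective ((QuotientGroup.mk' N).comp f)) {ψ : P →* H}
    (hψ : N ≤ ψ.ker) (p : P) : ∃ a, ψ (f a) = ψ p := by
  obtain ⟨a, ha⟩ := hs (QuotientGroup.mk' N p)
  refine ⟨a, ?_⟩
  simpa using congrArg (QuotientGroup.lift N ψ hψ) ha

theorem QuotientGroup.injective_mk'_comp_of_leftInverse {N : Subgroup P} [N.Normal]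
    {f : G →* P} {ψ : P →* G} (hψ : N ≤ ψ.ker) (hf : ∀ a, ψ (f a) = a) :
    Function.Injective ((QuotientGroup.mk' N).comp f) := fun a b hab => by
  simpa [hf] using congrArg (QuotientGroup.lift N ψ hψ) hab

theorem Monoid.Coprod.surjective_mk'_comp_inl {N : Subgroup (G ∗ H)} [N.Normal]
    (h : (QuotientGroup.mk' N).comp inr = 1) :
    Function.Surjective ((QuotientGroup.mk' N).comp (inl : G →* G ∗ H)) := by
  have hfac : QuotientGroup.mk' N =
      ((QuotientGroup.mk' N).comp inl).comp (lift (MonoidHom.id G) 1) :=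
    hom_ext (by ext; simp) (by rw [h]; ext; simp)
  exact Function.Surjective.of_comp (hfac ▸ QuotientGroup.mk'_surjective N)

theorem exists_translation_eigenfunction {R : Type*} [MonoidWithZero R] (g : G) (u : Rˣ)
    (hu : u ^ orderOf g = 1) : ∃ v : G → R, v 1 = 1 ∧ ∀ a, v (g * a) = u * v a := by
  have hfac : Function.FactorsThrough (fun m : ℤ => ((u ^ m : Rˣ) : R)) (g ^ ·) := by
    intro a b hab
    have hmod := (zpow_eq_zpow_iff_modEq.mp hab).of_dvd
      (Int.natCast_dvd_natCast.mpr (orderOf_dvd_of_pow_eq_one hu))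
    exact congrArg _ (zpow_eq_zpow_iff_modEq.mpr hmod)
  refine ⟨Function.extend (g ^ ·) (fun m : ℤ => ((u ^ m : Rˣ) : R)) 0, ?_, fun a => ?_⟩
  · simpa using hfac.extend_apply 0 0
  by_cases ha : ∃ m : ℤ, g ^ m = a
  · obtain ⟨m, rfl⟩ := ha
    rw [← zpow_one_add, hfac.extend_apply, hfac.extend_apply, zpow_one_add, Units.val_mul]
  · have hga : ¬∃ m : ℤ, g ^ m = g * a := fun ⟨m, hm⟩ =>
      ha ⟨-1 + m, by rw [zpow_add, hm, zpow_neg_one, inv_mul_cancel_left]⟩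
    rw [Function.extend_apply' _ _ _ ha, Function.extend_apply' _ _ _ hga, Pi.zero_apply,
      Pi.zero_apply, mul_zero]

theorem exists_unit_pow_eq_one_and_mul_add_eq_zero {F : Type*} [Field F] {a b : F} {n : ℕ}
    (hn : n ≠ 0) (hpow : a ^ n = (-b) ^ n) (hab : a + b ≠ 0) :
    ∃ u : Fˣ, u ^ n = 1 ∧ a * u + b = 0 := by
  have ha : a ≠ 0 := by
    rintro rfl
    rw [zero_pow hn, eq_comm, pow_eq_zero_iff hn, neg_eq_zero] at hpow
    simp [hpow] at hab
  have hb : -b ≠ 0 := by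
    intro hb
    rw [hb, zero_pow hn, pow_eq_zero_iff hn] at hpow
    exact ha hpow
  refine ⟨Units.mk0 (-b / a) (div_ne_zero hb ha), Units.ext ?_, ?_⟩
  · simp [div_pow, ← hpow, ha]
  · simp only [Units.val_mk0]
    field_simp
    ring

theorem Int.two_le_abs_pow_sub_pow {a b : ℤ} (ha : a ≠ 0) (hb : b ≠ 0) (hab : |a| ≠ |b|)
    {n : ℕ} (hn : 2 ≤ n) : 2 ≤ |a ^ n - b ^ n| := by
  wlog hlt : |b| < |a| generalizing a b
  · rw [abs_sub_comm]
    exact this hb ha hab.symm (lt_of_le_of_ne (not_lt.mp hlt) hab)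
  obtain ⟨m, rfl⟩ := Nat.exists_eq_add_of_le' hn
  have hb1 : 1 ≤ |b| := Int.one_le_abs hb
  have hpow : |b| ^ (m + 1) ≤ |a| ^ (m + 1) := pow_le_pow_left₀ (abs_nonneg b) hlt.le _
  have htwo : |a| ≤ |a| ^ (m + 1) := le_self_pow₀ (by omega) (by omega)
  calc 2 ≤ |a| ^ (m + 1) * |a| - |b| ^ (m + 1) * |b| := by
        nlinarith [mul_le_mul_of_nonneg_right hpow (abs_nonneg b)]
    _ = |a| ^ (m + 2) - |b| ^ (m + 2) := by ring
    _ ≤ |a ^ (m + 2) - b ^ (m + 2)| := by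
        rw [← abs_pow, ← abs_pow]; exact abs_sub_abs_le_abs_sub _ _

end General

namespace RelativePresentation

variable {G : Type*} [Group G]

abbrev gen : G ∗ FreeGroup Unit := inr (FreeGroup.of ())

def relator (g : G) (l k : ℤ) : G ∗ FreeGroup Unit := gen ^ l * inl g * gen ^ k * inl g⁻¹

def toQuotient (g : G) (l k : ℤ) :
    G →* (G ∗ FreeGroup Unit) ⧸ Subgroup.normalClosure {relator g l k} :=
  (QuotientGroup.mk' _).comp inl

variable {g : G} {l k : ℤ}

theorem injective_toQuotient : Function.Injective (toQuotient g l k) :=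
  QuotientGroup.injective_mk'_comp_of_leftInverse (ψ := lift (MonoidHom.id G) 1)
    (Subgroup.normalClosure_le_normal (by simp [relator])) (by simp)

theorem gen_zpow_add_mem_normalClosure (h : l = 0 ∨ k = 0) :
    (gen : G ∗ FreeGroup Unit) ^ (l + k) ∈ Subgroup.normalClosure {relator g l k} := by
  have hr : relator g l k ∈ Subgroup.normalClosure {relator g l k} :=
    Subgroup.subset_normalClosure rfl
  rcases h with rfl | rfl
  · simpa [relator, mul_assoc] using
      Subgroup.normalClosure_normal.conj_mem _ hr (inl g⁻¹)
  · simpa [relator, mul_assoc, ← map_mul] using hr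

theorem surjective_toQuotient (habs : |l + k| = 1) (h : l = 0 ∨ k = 0) :
    Function.Surjective (toQuotient g l k) := by
  have hgen := gen_zpow_add_mem_normalClosure (g := g) h
  apply Coprod.surjective_mk'_comp_inl
  refine FreeGroup.ext_hom _ _ fun _ => ?_
  rcases abs_eq zero_le_one |>.mp habs with h1 | h1 <;>
    simpa [h1, QuotientGroup.eq_one_iff] using hgen

theorem mem_range_of_surjective_toQuotient (hs : Function.Surjective (toQuotient g l k))
    {H : Type*} [Group H] (ρ : G →* H) {X : H} (hX : X ^ l * ρ g * X ^ k * ρ g⁻¹ = 1) :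
    X ∈ ρ.range := by
  let ψ : G ∗ FreeGroup Unit →* H := lift ρ (FreeGroup.lift fun _ => X)
  have hψ : Subgroup.normalClosure {relator g l k} ≤ ψ.ker :=
    Subgroup.normalClosure_le_normal (by simpa [relator, ψ] using hX)
  obtain ⟨a, ha⟩ := QuotientGroup.exists_apply_eq_of_surjective_mk'_comp hs hψ gen
  exact ⟨a, by simpa [ψ] using ha⟩

theorem not_surjective_toQuotient_of_unit {R : Type*} [Ring R] [Nontrivial R] (u : Rˣ)
    (hu : u ^ orderOf g = 1) (hlu : (l : R) * u + k = 0) :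
    ¬Function.Surjective (toQuotient g l k) := by
  intro hs
  obtain ⟨v, hv1, hv⟩ := exists_translation_eigenfunction g u hu
  let X : G → Multiplicative R := fun a => .ofAdd (v a)
  have hrel : X ^ l * mulAutArrow g (X ^ k) = 1 := by
    funext a
    have hva := hv (g⁻¹ * a)
    rw [mul_inv_cancel_left] at hva
    change Multiplicative.ofAdd (v a) ^ l * Multiplicative.ofAdd (v (g⁻¹ * a)) ^ k = 1
    rw [hva, ← ofAdd_zsmul, ← ofAdd_zsmul, ← ofAdd_add, ofAdd_eq_one, zsmul_eq_mul, zsmul_eq_mul,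
      ← mul_assoc, ← add_mul, hlu, zero_mul]
  have hX : (SemidirectProduct.inl X : (G → Multiplicative R) ⋊[mulAutArrow] G) ^ l *
      SemidirectProduct.inr g * SemidirectProduct.inl X ^ k * SemidirectProduct.inr g⁻¹ = 1 :=
    calc _ = SemidirectProduct.inl (X ^ l) * (SemidirectProduct.inr g *
          SemidirectProduct.inl (X ^ k) * SemidirectProduct.inr g⁻¹) := by
          simp only [map_zpow, mul_assoc]
      _ = 1 := by rw [← SemidirectProduct.inl_aut, ← map_mul, hrel, map_one]
  obtain ⟨a, ha⟩ := mem_range_of_surjective_toQuotient hs SemidirectProduct.inr hX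
  have := congrFun (congrArg SemidirectProduct.left ha) 1
  simp [X, hv1, eq_comm (a := (1 : Multiplicative R)), ofAdd_eq_one] at this

theorem abs_add_eq_one_of_surjective_toQuotient (hs : Function.Surjective (toQuotient g l k)) :
    |l + k| = 1 := by
  by_contra h
  have : Nontrivial (ZMod (l + k).natAbs) :=
    ZMod.nontrivial_iff.mpr fun h' => h (by rw [Int.abs_eq_natAbs, h', Nat.cast_one])
  refine not_surjective_toQuotient_of_unit (R := ZMod (l + k).natAbs) 1 (one_pow _) ?_ hs
  rw [Units.val_one, mul_one, ← Int.cast_add, ZMod.intCast_zmod_eq_zero_iff_dvd]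
  exact Int.natAbs_dvd.mpr dvd_rfl

theorem eq_zero_or_eq_zero_of_surjective_toQuotient (hg : g ≠ 1) (hfin : IsOfFinOrder g)
    (hs : Function.Surjective (toQuotient g l k)) : l = 0 ∨ k = 0 := by
  have habs := abs_add_eq_one_of_surjective_toQuotient hs
  by_contra! ⟨hl, hk⟩
  set n := orderOf g
  have hn : 2 ≤ n := by
    have := hfin.orderOf_pos
    have : n ≠ 1 := fun h => hg (orderOf_eq_one_iff.mp h)
    omega
  have hlk : |l| ≠ |-k| := by
    rw [abs_neg, Ne, abs_eq_abs]
    rcases abs_eq zero_le_one |>.mp habs with h | h <;> omega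
  obtain ⟨p, hp, hpM⟩ := Nat.exists_prime_and_dvd (n := (l ^ n - (-k) ^ n).natAbs) <| by
    have := Int.two_le_abs_pow_sub_pow hl (neg_ne_zero.mpr hk) hlk hn
    rw [Int.abs_eq_natAbs] at this
    omega
  have : Fact p.Prime := ⟨hp⟩
  have hpow : (l : ZMod p) ^ n = (-(k : ZMod p)) ^ n := by
    rw [← sub_eq_zero]
    exact_mod_cast (ZMod.intCast_zmod_eq_zero_iff_dvd _ p).mpr (Int.natCast_dvd.mpr hpM)
  have hadd : (l : ZMod p) + k ≠ 0 := by
    rw [← Int.cast_add]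
    rcases abs_eq zero_le_one |>.mp habs with h | h <;> simp [h]
  obtain ⟨u, hun, hu⟩ := exists_unit_pow_eq_one_and_mul_add_eq_zero (by omega) hpow hadd
  exact not_surjective_toQuotient_of_unit u hun hu hs

end RelativePresentation

theorem stmt_2_general {G : Type*} [Group G] (g : G) (hg : g ≠ 1) (hfin : IsOfFinOrder g)
    (l k : ℤ) :
    Function.Bijective
      ((QuotientGroup.mk' (Subgroup.normalClosure
          ({(Coprod.inr (FreeGroup.of ()) : Coprod G (FreeGroup Unit)) ^ l * Coprod.inl g *
            (Coprod.inr (FreeGroup.of ()) : Coprod G (FreeGroup Unit)) ^ k * Coprod.inl g⁻¹} :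
            Set (Coprod G (FreeGroup Unit))))).comp
        (Coprod.inl : G →* Coprod G (FreeGroup Unit))) ↔
      (|l + k| = 1 ∧ (l = 0 ∨ k = 0)) := by
  change Function.Bijective (RelativePresentation.toQuotient g l k) ↔ _
  refine ⟨fun ⟨_, hs⟩ => ?_, fun ⟨habs, h⟩ => ?_⟩
  · exact ⟨RelativePresentation.abs_add_eq_one_of_surjective_toQuotient hs,
      RelativePresentation.eq_zero_or_eq_zero_of_surjective_toQuotient hg hfin hs⟩
  · exact ⟨RelativePresentation.injective_toQuotient,
      RelativePresentation.surjective_toQuotient habs h⟩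

/-- Case (M) of Theorem 4.2: for `g ∈ G` a nontrivial element of finite order and
integers `l, k` not both zero, the natural map `G → ⟨G, x | xˡ g xᵏ g⁻¹⟩` is an
isomorphism iff `|l + k| = 1` and (`l = 0` or `k = 0`). -/
theorem stmt_2 {G : Type*} [Group G] (g : G) (hg : g ≠ 1) (hfin : IsOfFinOrder g)
    (l k : ℤ) (hlk : ¬(l = 0 ∧ k = 0)) :
    Function.Bijective
      ((QuotientGroup.mk' (Subgroup.normalClosure
          ({(Coprod.inr (FreeGroup.of ()) : Coprod G (FreeGroup Unit)) ^ l * Coprod.inl g *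
            (Coprod.inr (FreeGroup.of ()) : Coprod G (FreeGroup Unit)) ^ k * Coprod.inl g⁻¹} :
            Set (Coprod G (FreeGroup Unit))))).comp
        (Coprod.inl : G →* Coprod G (FreeGroup Unit))) ↔
      (|l + k| = 1 ∧ (l = 0 ∨ k = 0)) :=
  stmt_2_general g hg hfin l k
end

section
/- Let G be a group, let g, h ∈ G, and let l be a nonzero integer. Let Q be the quotient of the free product G ∗ F(x) (F(x) the free group on one generator x) by the normal closure of the element x^l · g · x^l · h. Then the image in Q of the element x^l · g is not conjugate in Q to the image of any element of G; that is, for all q ∈ Q and all a ∈ G, the image of x^l · g in Q is not equal to q · (image of a) · q⁻¹. -/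
/-!
The exponent sum in `x`, taken modulo `2l`, vanishes on the relator `xˡ g xˡ h` and so factors
through `Q`; with values in an abelian group it is constant on conjugacy classes. It takes the
value `l ≢ 0` on `xˡ g` and `0` on the image of `G`.
-/

open Monoid Monoid.Coprod

theorem QuotientGroup.lift_eq_of_isConj_mk {H A : Type*} [Group H] [CommGroup A] {N : Subgroup H}
    [N.Normal] (f : H →* A) (hN : N ≤ f.ker) {x y : H}
    (hxy : IsConj (x : H ⧸ N) (y : H ⧸ N)) : f x = f y :=
  isConj_iff_eq.mp ((QuotientGroup.lift N f hN).map_isConj hxy)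

def exponentSumMod (G : Type*) [Group G] (n : ℕ) :
    Coprod G (FreeGroup Unit) →* Multiplicative (ZMod n) :=
  Coprod.lift 1 (FreeGroup.lift fun _ => Multiplicative.ofAdd 1)

section
variable {G : Type*} [Group G] (n : ℕ)

@[simp] theorem exponentSumMod_inl (a : G) : exponentSumMod G n (Coprod.inl a) = 1 := by
  simp [exponentSumMod]

@[simp] theorem exponentSumMod_inr_zpow (k : ℤ) :
    exponentSumMod G n ((Coprod.inr (FreeGroup.of ())) ^ k) = Multiplicative.ofAdd (k : ZMod n) := by
  simp [exponentSumMod, ← ofAdd_zsmul]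
end

theorem exponentSumMod_relator {G : Type*} [Group G] (g h : G) (l : ℤ) :
    exponentSumMod G (2 * l).natAbs
      ((Coprod.inr (FreeGroup.of ())) ^ l * Coprod.inl g * (Coprod.inr (FreeGroup.of ())) ^ l *
        Coprod.inl h) = 1 := by
  have h2l : ((2 * l : ℤ) : ZMod (2 * l).natAbs) = 0 :=
    (ZMod.intCast_zmod_eq_zero_iff_dvd _ _).mpr Int.natAbs_dvd_self
  simp [← ofAdd_add, ← two_mul, ← h2l]

theorem ZMod.intCast_ne_zero_of_two_mul {l : ℤ} (hl : l ≠ 0) : (l : ZMod (2 * l).natAbs) ≠ 0 := by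
  rw [ne_eq, ZMod.intCast_zmod_eq_zero_iff_dvd, Int.natCast_natAbs, abs_dvd]
  rintro ⟨k, hk⟩
  have hprod : l * (2 * k - 1) = 0 := by linarith
  rcases mul_eq_zero.mp hprod with hl0 | hk1 <;> omega

/-- In `Q = ⟨G, x | xˡ g xˡ h⟩` with `l ≠ 0`, the image of `xˡ g` is not
conjugate in `Q` to the image of any element of `G`. -/
theorem stmt_3 {G : Type*} [Group G] (g h : G) (l : ℤ) (hl : l ≠ 0) :
    ∀ (q : Coprod G (FreeGroup Unit) ⧸ Subgroup.normalClosure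
        ({(Coprod.inr (FreeGroup.of ()) : Coprod G (FreeGroup Unit)) ^ l * Coprod.inl g *
          (Coprod.inr (FreeGroup.of ()) : Coprod G (FreeGroup Unit)) ^ l * Coprod.inl h} :
          Set (Coprod G (FreeGroup Unit)))) (a : G),
      (QuotientGroup.mk' _)
          ((Coprod.inr (FreeGroup.of ()) : Coprod G (FreeGroup Unit)) ^ l * Coprod.inl g) ≠
        q * (QuotientGroup.mk' _) (Coprod.inl a : Coprod G (FreeGroup Unit)) * q⁻¹ := by
  intro q a hconj
  have hrel := Subgroup.normalClosure_le_normal (N := (exponentSumMod G (2 * l).natAbs).ker)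
    (Set.singleton_subset_iff.mpr (exponentSumMod_relator g h l))
  have hexp := QuotientGroup.lift_eq_of_isConj_mk _ hrel (isConj_iff.mpr ⟨q, hconj.symm⟩)
  simp only [map_mul, exponentSumMod_inr_zpow, exponentSumMod_inl, mul_one] at hexp
  exact ZMod.intCast_ne_zero_of_two_mul hl (ofAdd_eq_one.mp hexp.symm)
end

section
/- The group defined by the presentation ⟨x, y | x y x⁻¹ y⁻², y x y⁻¹ x⁻²⟩ (i.e. the quotient of the free group on two generators x, y by the normal closure of the two relators x y x⁻¹ y⁻² and y x y⁻¹ x⁻²) is the trivial group. -/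
/-!
The relations say that the commutators satisfy `[x, y] = y` and `[y, x] = x`. Since
`[y, x] = [x, y]⁻¹`, this forces `x = y⁻¹`; then `x` and `y` commute, so `[x, y] = 1 = y`.
-/

/-- The relators `x y x⁻¹ y⁻²` and `y x y⁻¹ x⁻²` in the free group on two
generators `x = of 0`, `y = of 1`. -/
def stmt5Rels : Set (FreeGroup (Fin 2)) :=
  {FreeGroup.of 0 * FreeGroup.of 1 * (FreeGroup.of 0)⁻¹ *
      (FreeGroup.of 1)⁻¹ * (FreeGroup.of 1)⁻¹,
   FreeGroup.of 1 * FreeGroup.of 0 * (FreeGroup.of 1)⁻¹ *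
      (FreeGroup.of 0)⁻¹ * (FreeGroup.of 0)⁻¹}

theorem PresentedGroup.eq_one_of_forall_of_eq_one {α : Type*} {rels : Set (FreeGroup α)}
    (h : ∀ i : α, (PresentedGroup.of i : PresentedGroup rels) = 1) (g : PresentedGroup rels) :
    g = 1 :=
  Subgroup.mem_bot.mp <| PresentedGroup.generated_by rels ⊥ (fun i => Subgroup.mem_bot.mpr (h i)) g

theorem eq_one_of_commutator_relators {G : Type*} [Group G] {x y : G}
    (hxy : x * y * x⁻¹ * y⁻¹ * y⁻¹ = 1) (hyx : y * x * y⁻¹ * x⁻¹ * x⁻¹ = 1) :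
    x = 1 ∧ y = 1 := by
  have hx : x = y⁻¹ :=
    calc x = y * x * y⁻¹ * x⁻¹ := (mul_inv_eq_one.mp hyx).symm
      _ = (x * y * x⁻¹ * y⁻¹)⁻¹ := by group
      _ = y⁻¹ := by rw [mul_inv_eq_one.mp hxy]
  subst hx
  have hy : y = 1 := by simpa using hxy
  exact ⟨by rw [hy, inv_one], hy⟩

open PresentedGroup in
/-- The group `⟨x, y | x y x⁻¹ y⁻², y x y⁻¹ x⁻²⟩` is trivial. -/
theorem stmt_5 : ∀ a : PresentedGroup stmt5Rels, a = 1 := by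
  have hxy : (of 0 : PresentedGroup stmt5Rels) * of 1 * (of 0)⁻¹ * (of 1)⁻¹ * (of 1)⁻¹ = 1 :=
    one_of_mem (Or.inl rfl)
  have hyx : (of 1 : PresentedGroup stmt5Rels) * of 0 * (of 1)⁻¹ * (of 0)⁻¹ * (of 0)⁻¹ = 1 :=
    one_of_mem (Or.inr rfl)
  obtain ⟨hx, hy⟩ := eq_one_of_commutator_relators hxy hyx
  refine eq_one_of_forall_of_eq_one fun i => ?_
  fin_cases i
  · exact hx
  · exact hy
end

section
/- Let G be a group and let g, h ∈ G satisfy h² = 1 and g h = h g. Let Q be the quotient of the free product G ∗ F(x) (F(x) the free group on one generator x) by the normal closure of the element x² · g · x⁻¹ · h. Then in Q the relation (x g h)² = g⁻¹ (x g h) g holds, where g, h, x denote the images in Q of g, h and the free generator x. -/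
/-!
In `Q` the relator gives `h = h⁻¹ = x² g x⁻¹`, so `h² = 1` becomes `x (x g x g) x⁻¹ = 1`, i.e.
`x g x = g⁻¹`. Moving `h` past `x` as `h x = x² g` then turns `(x g h)²` into
`(x g x) x g g h = g⁻¹ x g h g`, using that `g` and `h` commute.
-/

open Monoid Monoid.Coprod

section Relator

variable {Q : Type*} [Group Q] {X A B : Q}

theorem eq_of_relator_of_sq_eq_one (hrel : X ^ 2 * A * X⁻¹ * B = 1) (hB : B ^ 2 = 1) :
    B = X ^ 2 * A * X⁻¹ :=
  calc B = B⁻¹ := eq_inv_of_mul_eq_one_left (by rwa [← pow_two])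
    _ = X ^ 2 * A * X⁻¹ := (mul_eq_one_iff_eq_inv.mp hrel).symm

theorem mul_mul_eq_inv_of_relator (hrel : X ^ 2 * A * X⁻¹ * B = 1) (hB : B ^ 2 = 1) :
    X * A * X = A⁻¹ := by
  have hconj : X * (X * A * X * A) * X⁻¹ = 1 := by
    rw [← hB, eq_of_relator_of_sq_eq_one hrel hB, pow_two, pow_two]
    group
  have hXAXA : X * A * X * A = 1 := by
    simpa only [mul_inv_eq_one, mul_eq_left] using hconj
  exact eq_inv_of_mul_eq_one_left hXAXA

theorem sq_mul_mul_eq_conj_of_relator (hrel : X ^ 2 * A * X⁻¹ * B = 1) (hB : B ^ 2 = 1)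
    (hAB : Commute A B) : (X * A * B) ^ 2 = A⁻¹ * (X * A * B) * A := by
  have hBX : B * X = X ^ 2 * A := by
    rw [eq_of_relator_of_sq_eq_one hrel hB]
    group
  calc (X * A * B) ^ 2 = X * A * (B * X) * A * B := by rw [pow_two]; group
    _ = X * A * X * (X * A * (A * B)) := by rw [hBX, pow_two]; group
    _ = A⁻¹ * (X * A * B) * A := by
      rw [mul_mul_eq_inv_of_relator hrel hB, hAB.eq]
      group

end Relator

theorem QuotientGroup.mk'_normalClosure_singleton_self {H : Type*} [Group H] (r : H) :
    QuotientGroup.mk' (Subgroup.normalClosure {r}) r = 1 :=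
  (QuotientGroup.eq_one_iff r).mpr (Subgroup.subset_normalClosure rfl)

/-- In `Q = ⟨G, x | x² g x⁻¹ h⟩` with `h² = 1` and `g h = h g`, the relation
`(x g h)² = g⁻¹ (x g h) g` holds. -/
theorem stmt_14 {G : Type*} [Group G] (g h : G) (hh : h ^ 2 = 1)
    (hcomm : g * h = h * g) :
    (let π := QuotientGroup.mk' (Subgroup.normalClosure
        ({(Coprod.inr (FreeGroup.of ()) : Coprod G (FreeGroup Unit)) ^ 2 * Coprod.inl g *
          (Coprod.inr (FreeGroup.of ()) : Coprod G (FreeGroup Unit))⁻¹ * Coprod.inl h} :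
          Set (Coprod G (FreeGroup Unit))))
     (π (Coprod.inr (FreeGroup.of ())) * π (Coprod.inl g) * π (Coprod.inl h)) ^ 2 =
       (π (Coprod.inl g))⁻¹ *
         (π (Coprod.inr (FreeGroup.of ())) * π (Coprod.inl g) * π (Coprod.inl h)) *
         π (Coprod.inl g)) := by
  intro π
  apply sq_mul_mul_eq_conj_of_relator
  · have hr : π ((Coprod.inr (FreeGroup.of ()) : Coprod G (FreeGroup Unit)) ^ 2 * Coprod.inl g *
        (Coprod.inr (FreeGroup.of ()))⁻¹ * Coprod.inl h) = 1 :=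
      QuotientGroup.mk'_normalClosure_singleton_self _
    simpa only [map_mul, map_inv, map_pow] using hr
  · simpa only [map_pow, map_one] using congrArg (fun k => π (Coprod.inl k)) hh
  · exact ((show Commute g h from hcomm).map Coprod.inl).map π
end

section
/- Let G be a group and let g, h ∈ G satisfy h² = 1 and g h = h g, and suppose g has finite order m ≥ 1. Let Q be the quotient of the free product G ∗ F(x) (F(x) the free group on one generator x) by the normal closure of the element x² · g · x⁻¹ · h. Then the image of x g h in Q satisfies (x g h)^(2^m − 1) = 1; in particular x g h has finite order in Q. -/
/-!
Write `y = x g h`. Since `h` is an involution, the relation reads `h = x² g x⁻¹`, and then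
`h² = 1` becomes `x g x = g⁻¹`. Together with `g h = h g` this gives `y² = g⁻¹ y g`: squaring `y`
is conjugation by `g`. Hence `y^(2^m) = g⁻ᵐ y gᵐ = y`, i.e. `y^(2^m - 1) = 1`.
-/

open Monoid Monoid.Coprod

section

variable {Q : Type*} [Group Q]

theorem sq_mul_mul_eq_conj {x a b : Q} (hrel : x ^ 2 * a * x⁻¹ * b = 1) (hb : b ^ 2 = 1)
    (hab : a * b = b * a) : (x * a * b) ^ 2 = a⁻¹ * (x * a * b) * a := by
  have hb_eq : x ^ 2 * a * x⁻¹ = b := by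
    rw [eq_inv_of_mul_eq_one_left hrel, ← mul_eq_one_iff_inv_eq, ← sq, hb]
  have hbx : b * x = x ^ 2 * a := by rw [← hb_eq]; group
  have hxax : x * a * x = a⁻¹ := by
    calc x * a * x = x⁻¹ * (x ^ 2 * a * x⁻¹) ^ 2 * x * a⁻¹ := by rw [sq (_ * _)]; group
      _ = a⁻¹ := by rw [hb_eq, hb]; group
  calc (x * a * b) ^ 2 = x * a * (b * x) * a * b := by rw [sq]; group
    _ = x * a * x * (x * a * (a * b)) := by rw [hbx, sq]; group
    _ = a⁻¹ * (x * a * b) * a := by rw [hxax, hab]; group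

theorem pow_two_pow_eq_conj {y c : Q} (h : y ^ 2 = c⁻¹ * y * c) (k : ℕ) :
    y ^ 2 ^ k = (c ^ k)⁻¹ * y * c ^ k := by
  induction k with
  | zero => simp
  | succ k ih =>
    calc y ^ 2 ^ (k + 1) = ((c ^ k)⁻¹ * y * c ^ k) ^ 2 := by rw [pow_succ, pow_mul, ih]
      _ = (c ^ k)⁻¹ * y ^ 2 * c ^ k := by rw [sq, sq]; group
      _ = (c ^ (k + 1))⁻¹ * y * c ^ (k + 1) := by rw [h]; group

theorem pow_two_pow_sub_one_eq_one_of_sq_eq_conj {y c : Q} (h : y ^ 2 = c⁻¹ * y * c) {m : ℕ}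
    (hc : c ^ m = 1) : y ^ (2 ^ m - 1) = 1 := by
  have hy : y ^ 2 ^ m = y := by rw [pow_two_pow_eq_conj h, hc]; group
  rw [← mul_eq_right (b := y), pow_sub_one_mul (pow_ne_zero m two_ne_zero), hy]

theorem MonoidHom.pow_two_pow_sub_one_eq_one {G : Type*} [Group G] (φ : G →* Q) (t : Q)
    {g h : G} (hrel : t ^ 2 * φ g * t⁻¹ * φ h = 1) (hh : h ^ 2 = 1) (hcomm : g * h = h * g)
    {m : ℕ} (hgm : g ^ m = 1) : (t * φ g * φ h) ^ (2 ^ m - 1) = 1 := by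
  refine pow_two_pow_sub_one_eq_one_of_sq_eq_conj (sq_mul_mul_eq_conj hrel ?_ ?_) (c := φ g) ?_
  · rw [← map_pow, hh, map_one]
  · rw [← map_mul, hcomm, map_mul]
  · rw [← map_pow, hgm, map_one]

end

theorem stmt_15_general {G : Type*} [Group G] (g h : G) (hh : h ^ 2 = 1)
    (hcomm : g * h = h * g) (m : ℕ) (hgm : g ^ m = 1) :
    (let π := QuotientGroup.mk' (Subgroup.normalClosure
        ({(Coprod.inr (FreeGroup.of ()) : Coprod G (FreeGroup Unit)) ^ 2 * Coprod.inl g *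
          (Coprod.inr (FreeGroup.of ()) : Coprod G (FreeGroup Unit))⁻¹ * Coprod.inl h} :
          Set (Coprod G (FreeGroup Unit))))
     (π (Coprod.inr (FreeGroup.of ())) * π (Coprod.inl g) * π (Coprod.inl h)) ^
        (2 ^ m - 1) = 1) := by
  intro π
  have hrel : π (Coprod.inr (FreeGroup.of ()) ^ 2 * Coprod.inl g *
      (Coprod.inr (FreeGroup.of ()))⁻¹ * Coprod.inl h) = 1 :=
    (QuotientGroup.eq_one_iff _).mpr (Subgroup.subset_normalClosure rfl)
  simp only [map_mul, map_pow, map_inv] at hrel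
  exact (π.comp Coprod.inl).pow_two_pow_sub_one_eq_one _ hrel hh hcomm hgm

/-- In `Q = ⟨G, x | x² g x⁻¹ h⟩` with `h² = 1`, `g h = h g` and `gᵐ = 1` (`m ≥ 1`),
the image of `x g h` satisfies `(x g h)^(2^m - 1) = 1`. -/
theorem stmt_15 {G : Type*} [Group G] (g h : G) (hh : h ^ 2 = 1)
    (hcomm : g * h = h * g) (m : ℕ) (hm : 1 ≤ m) (hgm : g ^ m = 1) :
    (let π := QuotientGroup.mk' (Subgroup.normalClosure
        ({(Coprod.inr (FreeGroup.of ()) : Coprod G (FreeGroup Unit)) ^ 2 * Coprod.inl g *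
          (Coprod.inr (FreeGroup.of ()) : Coprod G (FreeGroup Unit))⁻¹ * Coprod.inl h} :
          Set (Coprod G (FreeGroup Unit))))
     (π (Coprod.inr (FreeGroup.of ())) * π (Coprod.inl g) * π (Coprod.inl h)) ^
        (2 ^ m - 1) = 1) :=
  stmt_15_general g h hh hcomm m hgm
end
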